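/- The symmetric psd-rank of the tripartite W-state W_3 is at least 3. In particular, since its symmetric border psd-rank equals 2, there is a gap between rank and border rank for symmetric psd-decompositions at n = 3. -/

import Mathlib

open scoped ComplexOrder

/-- The tripartite W-state. -/
noncomputable def Wstate3 : (Fin 3 → Fin 2) → ℂ := fun j =>
  if (Finset.univ.filter (fun i => j i = 1)).card = 1 then 1 else 0

/-- `T` admits a symmetric psd-decomposition of size `r`. -/
def hasSymPsdRankLE (T : (Fin 3 → Fin 2) → ℂ) (r : ℕ) : Prop :=
  ∃ A : Fin 2 → Matrix (Fin r) (Fin r) ℂ,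
    (∀ j, (A j).PosSemidef) ∧
    ∀ j : Fin 3 → Fin 2, T j = ∑ α : Fin r, ∑ β : Fin r, ∏ i, A (j i) α β

/-!
Let `M = A 0` and `N = A 1`. By the Schur product theorem the entrywise products
`M ⊙ M ⊙ M`, `N ⊙ N ⊙ N` and `M ⊙ N ⊙ N` are psd, and the total sums of their entries are the
vanishing coefficients `W(000)`, `W(111)`, `W(011)`; so the all-ones vector lies in their kernels
and all their row sums vanish. If `r ≤ 2`, every row has at most two entries, and this forces
every row sum of `M ⊙ M ⊙ N` to vanish too, contradicting `W(001) = 1`.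
-/

open Finset

namespace Matrix

variable {𝕜 n : Type*} [RCLike 𝕜] [Fintype n]

theorem posSemidef_prod_hadamard {ι : Type*} (s : Finset ι) {A : ι → Matrix n n 𝕜}
    (hA : ∀ i ∈ s, (A i).PosSemidef) : (of fun α β => ∏ i ∈ s, A i α β).PosSemidef := by
  classical
  induction s using Finset.induction_on with
  | empty => simpa [vecMulVec] using posSemidef_vecMulVec_self_star (1 : n → 𝕜)
  | insert i s hi ih =>
    simp_rw [prod_insert hi]
    exact (hA i (mem_insert_self i s)).hadamard (ih fun k hk => hA k (mem_insert_of_mem hk))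

theorem PosSemidef.sum_apply_eq_zero_of_sum_sum_eq_zero {A : Matrix n n 𝕜} (hA : A.PosSemidef)
    (h : ∑ i, ∑ j, A i j = 0) (i : n) : ∑ j, A i j = 0 := by
  have hq : star 1 ⬝ᵥ A *ᵥ 1 = 0 := by
    simpa [dotProduct, mulVec] using h
  simpa [mulVec, dotProduct] using congrFun ((hA.dotProduct_mulVec_zero_iff 1).1 hq) i

end Matrix

section TwoTerms

variable {R : Type*} [CommRing R] [NoZeroDivisors R]

theorem sq_mul_add_sq_mul_eq_zero {a b c d : R} (hab : a ^ 3 + b ^ 3 = 0)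
    (hcd : c ^ 3 + d ^ 3 = 0) (h : a * c ^ 2 + b * d ^ 2 = 0) : a ^ 2 * c + b ^ 2 * d = 0 := by
  -- `(b² d) (b d²) = b³ d³ = a³ c³` and `b d² = -a c²`
  have key : a * c ^ 2 * (a ^ 2 * c + b ^ 2 * d) = 0 := by
    linear_combination c ^ 3 * hab - b ^ 3 * hcd + b ^ 2 * d * h
  rcases mul_eq_zero.1 key with hac | hsum
  · rcases mul_eq_zero.1 hac with rfl | hc
    · obtain rfl : b = 0 := pow_eq_zero_iff (n := 3) (by norm_num) |>.1 (by simpa using hab)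
      simp
    · obtain rfl : c = 0 := pow_eq_zero_iff (n := 2) (by norm_num) |>.1 hc
      obtain rfl : d = 0 := pow_eq_zero_iff (n := 3) (by norm_num) |>.1 (by simpa using hcd)
      simp
  · exact hsum

theorem sum_sq_mul_eq_zero_of_le_two {r : ℕ} (hr : r ≤ 2) {x y : Fin r → R}
    (hx : ∑ i, x i ^ 3 = 0) (hy : ∑ i, y i ^ 3 = 0) (hxy : ∑ i, x i * y i ^ 2 = 0) :
    ∑ i, x i ^ 2 * y i = 0 := by
  interval_cases r
  · simp
  · simp only [Fin.sum_univ_one] at *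
    simp [pow_eq_zero_iff (n := 3) (by norm_num) |>.1 hx]
  · simp only [Fin.sum_univ_two] at *
    exact sq_mul_add_sq_mul_eq_zero hx hy hxy

end TwoTerms

theorem symPsdRank_W3_ge_three (r : ℕ) (h : hasSymPsdRankLE Wstate3 r) : 3 ≤ r := by
  obtain ⟨A, hA, hW⟩ := h
  by_contra! hr
  have hrow (j : Fin 3 → Fin 2) (hj : Wstate3 j = 0) (α : Fin r) :
      ∑ β, ∏ i, A (j i) α β = 0 :=
    (Matrix.posSemidef_prod_hadamard univ fun i _ => hA (j i)).sum_apply_eq_zero_of_sum_sum_eq_zero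
      (by simpa [← hW j] using hj) α
  have h000 := hrow (fun _ => 0) (by simp [Wstate3])
  have h111 := hrow (fun _ => 1) (by simp [Wstate3])
  have h011 := hrow ![0, 1, 1] (by simp [Wstate3]; decide)
  simp only [Fin.prod_const] at h000 h111
  simp only [Fin.prod_univ_three, Matrix.cons_val, mul_assoc, ← sq] at h011
  have h001 : Wstate3 ![0, 0, 1] = 0 := by
    simp only [hW, Fin.prod_univ_three, Matrix.cons_val, ← sq]
    exact sum_eq_zero fun α _ =>
      sum_sq_mul_eq_zero_of_le_two (by omega) (h000 α) (h111 α) (h011 α)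
  simp only [Wstate3, ite_eq_right_iff, one_ne_zero, imp_false] at h001
  exact h001 (by decide)
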